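/- Let Z be a row-stochastic N×N real matrix with stationary distribution w, and let q be any probability row vector (nonnegative entries summing to 1). Then ‖q − qZ‖₁ ≥ (1 − τ₁(Z))·‖q − w‖₁. -/

import Mathlib

/-!
Writing `v = q - w`, stationarity of `w` gives `q - qZ = v - vZ`, so it suffices that a zero-sum
vector contracts: `‖vZ‖₁ ≤ τ₁(Z) ‖v‖₁`. Split `v = v⁺ - v⁻`; both parts have the same mass `c`, and
`c · vZ = ∑ᵢ ∑ⱼ v⁺ᵢ v⁻ⱼ (Zᵢ - Zⱼ)` writes `vZ` as a combination of row differences with total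
weight `c² = (‖v‖₁ / 2)²`.
-/

/-- Coefficient of ergodicity τ₁ of a row-stochastic matrix. -/
noncomputable def tau1 {N : ℕ} (P : Fin N → Fin N → ℝ) : ℝ :=
  (1 / 2) * ⨆ i, ⨆ j, ∑ k, |P i k - P j k|

open Finset

section ZeroSumContraction

variable {ι κ : Type*} [Fintype ι] [Fintype κ]

lemma sum_sum_mul_mul_sub (p m x : ι → ℝ) :
    ∑ i, ∑ j, p i * m j * (x i - x j) =
      (∑ j, m j) * ∑ i, p i * x i - (∑ i, p i) * ∑ j, m j * x j := by
  simp only [mul_sub, sum_sub_distrib, mul_sum, sum_mul]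
  rw [sum_comm (f := fun i j => p i * m j * x j)]
  congr 1 <;> refine sum_congr rfl fun _ _ => sum_congr rfl fun _ _ => by ring

lemma sum_negPart_eq_sum_posPart {v : ι → ℝ} (hv : ∑ i, v i = 0) :
    ∑ i, (v i)⁻ = ∑ i, (v i)⁺ := by
  have : ∑ i, ((v i)⁺ - (v i)⁻) = 0 := by simpa only [posPart_sub_negPart] using hv
  rw [sum_sub_distrib] at this
  linarith

lemma sum_abs_sum_mul_le_of_sum_eq_zero (Z : ι → κ → ℝ) {D : ℝ}
    (hD : ∀ i j, ∑ k, |Z i k - Z j k| ≤ D) {v : ι → ℝ} (hv : ∑ i, v i = 0) :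
    ∑ k, |∑ i, v i * Z i k| ≤ D / 2 * ∑ i, |v i| := by
  set c := ∑ i, (v i)⁺
  have hc : 0 ≤ c := sum_nonneg fun i _ => posPart_nonneg (v i)
  have hneg : ∑ i, (v i)⁻ = c := sum_negPart_eq_sum_posPart hv
  have hmass : ∑ i, |v i| = 2 * c := by
    simp only [← posPart_add_negPart, sum_add_distrib, hneg]; ring
  have hweight : ∀ i j, 0 ≤ (v i)⁺ * (v j)⁻ := fun i j =>
    mul_nonneg (posPart_nonneg _) (negPart_nonneg _)
  have hdecomp : ∀ k, c * ∑ i, v i * Z i k = ∑ i, ∑ j, (v i)⁺ * (v j)⁻ * (Z i k - Z j k) := by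
    intro k
    rw [sum_sum_mul_mul_sub, hneg, ← mul_sub, ← sum_sub_distrib]
    simp only [← sub_mul, posPart_sub_negPart]
  have hbound : c * ∑ k, |∑ i, v i * Z i k| ≤ c * (D * c) := calc
    c * ∑ k, |∑ i, v i * Z i k| = ∑ k, |c * ∑ i, v i * Z i k| := by
      rw [mul_sum]
      simp only [abs_mul, abs_of_nonneg hc]
    _ ≤ ∑ k, ∑ i, ∑ j, (v i)⁺ * (v j)⁻ * |Z i k - Z j k| := by
      refine sum_le_sum fun k _ => ?_
      rw [hdecomp]
      refine (abs_sum_le_sum_abs _ _).trans (sum_le_sum fun i _ => ?_)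
      refine (abs_sum_le_sum_abs _ _).trans (sum_le_sum fun j _ => ?_)
      rw [abs_mul, abs_of_nonneg (hweight i j)]
    _ = ∑ i, ∑ j, (v i)⁺ * (v j)⁻ * ∑ k, |Z i k - Z j k| := by
      simp only [mul_sum]
      rw [sum_comm]
      exact sum_congr rfl fun _ _ => sum_comm
    _ ≤ ∑ i, ∑ j, (v i)⁺ * (v j)⁻ * D :=
      sum_le_sum fun i _ => sum_le_sum fun j _ =>
        mul_le_mul_of_nonneg_left (hD i j) (hweight i j)
    _ = c * (D * c) := by
      simp only [← sum_mul, ← mul_sum, hneg]; ring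
  rcases hc.eq_or_lt with hc0 | hcpos
  · have hv0 : ∀ i, v i = 0 := fun i => abs_eq_zero.mp <|
      (sum_eq_zero_iff_of_nonneg fun i _ => abs_nonneg (v i)).mp (by rw [hmass, ← hc0, mul_zero])
        i (mem_univ i)
    simp [hv0]
  · rw [hmass]
    nlinarith [le_of_mul_le_mul_left hbound hcpos]

end ZeroSumContraction

lemma sum_abs_sub_le_two_mul_tau1 {N : ℕ} (Z : Fin N → Fin N → ℝ) (i j : Fin N) :
    ∑ k, |Z i k - Z j k| ≤ 2 * tau1 Z := by
  have hj := le_ciSup (Finite.bddAbove_range fun j => ∑ k, |Z i k - Z j k|) j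
  have hi := le_ciSup (Finite.bddAbove_range fun i => ⨆ j, ∑ k, |Z i k - Z j k|) i
  unfold tau1
  linarith

theorem one_step_contraction_lower_bound_general {N : ℕ}
    (Z : Fin N → Fin N → ℝ)
    (w : Fin N → ℝ) (hwsum : ∑ i, w i = 1)
    (hwstat : ∀ k, ∑ i, w i * Z i k = w k)
    (q : Fin N → ℝ) (hqsum : ∑ i, q i = 1) :
    (1 - tau1 Z) * ∑ i, |q i - w i| ≤ ∑ k, |q k - ∑ i, q i * Z i k| := by
  have hsum : ∑ i, (q i - w i) = 0 := by rw [sum_sub_distrib, hqsum, hwsum, sub_self]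
  have hstep : ∀ k, q k - ∑ i, q i * Z i k = (q k - w k) - ∑ i, (q i - w i) * Z i k := by
    intro k
    simp only [sub_mul, sum_sub_distrib, hwstat]
    ring
  have hcontract := sum_abs_sum_mul_le_of_sum_eq_zero Z (sum_abs_sub_le_two_mul_tau1 Z) hsum
  calc (1 - tau1 Z) * ∑ i, |q i - w i|
      ≤ ∑ k, (|q k - w k| - |∑ i, (q i - w i) * Z i k|) := by
        rw [sum_sub_distrib]
        linarith
    _ ≤ ∑ k, |q k - ∑ i, q i * Z i k| :=
        sum_le_sum fun k _ => hstep k ▸ abs_sub_abs_le_abs_sub _ _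

/-- For a row-stochastic `Z` with stationary distribution `w` and any probability
vector `q`, `‖q − qZ‖₁ ≥ (1 − τ₁(Z))·‖q − w‖₁`. -/
theorem one_step_contraction_lower_bound {N : ℕ} [NeZero N]
    (Z : Fin N → Fin N → ℝ)
    (hZnn : ∀ i k, 0 ≤ Z i k) (hZrow : ∀ i, ∑ k, Z i k = 1)
    (w : Fin N → ℝ) (hwnn : ∀ i, 0 ≤ w i) (hwsum : ∑ i, w i = 1)
    (hwstat : ∀ k, ∑ i, w i * Z i k = w k)
    (q : Fin N → ℝ) (hqnn : ∀ i, 0 ≤ q i) (hqsum : ∑ i, q i = 1) :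
    (1 - tau1 Z) * ∑ i, |q i - w i| ≤ ∑ k, |q k - ∑ i, q i * Z i k| :=
  one_step_contraction_lower_bound_general Z w hwsum hwstat q hqsum
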